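/- Suppose n − 1 points occupy positions (1, −1), (2, −1), …, (n−1, −1) on the line y = −1 in ℤ², and one leader occupies (0, −1). Suppose targets t₀, …, t_{n−2} all have positive x and y coordinates and are ordered so that if i < j then t_i is on a strictly higher horizontal line than t_j, or on the same horizontal line and strictly to the right of t_j, and the leader target t_{n−1} lies on y = 1. Then, moving the robots one at a time, each robot r_k currently rightmost-remaining at (n−1−m, −1) along the path: vertically up to y = y(t) − 1, then horizontally to (x(t), y(t) − 1), then up one step to its target t, and finally the leader along (0,−1) → (0,0) → horizontally → up to t_{n−1}, no two robots ever occupy the same grid point at any time and no robot's path passes through a grid point occupied by a stationary robot. -/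
import Mathlib


/-- Vertical grid segment `{x} × [y₁, y₂]`. -/
def vertSeg (x y₁ y₂ : ℤ) : Set (ℤ × ℤ) := {p | p.1 = x ∧ y₁ ≤ p.2 ∧ p.2 ≤ y₂}

/-- Horizontal grid segment `[x₁, x₂] × {y}`. -/
def horizSeg (x₁ x₂ y : ℤ) : Set (ℤ × ℤ) := {p | p.2 = y ∧ x₁ ≤ p.1 ∧ p.1 ≤ x₂}

/-- The GotoTarget path of the `m`-th mover, starting at `(n-1-m, -1)`:
up to the line just below its target `t m`, across, and one step up. -/
def moverPath (n : ℕ) (t : ℕ → ℤ × ℤ) (m : ℕ) : Set (ℤ × ℤ) :=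
  vertSeg ((n : ℤ) - 1 - m) (-1) ((t m).2 - 1) ∪
  horizSeg (min ((n : ℤ) - 1 - m) (t m).1) (max ((n : ℤ) - 1 - m) (t m).1) ((t m).2 - 1) ∪
  {t m}

/-- The grid points occupied by the stationary robots when the `m`-th mover
moves: the remaining robots on `y = -1`, the leader at `(0,-1)`, and the
already placed targets. -/
def occupiedAt (n : ℕ) (t : ℕ → ℤ × ℤ) (m : ℕ) : Set (ℤ × ℤ) :=
  {p | p.2 = -1 ∧ 1 ≤ p.1 ∧ p.1 ≤ (n : ℤ) - 2 - m} ∪ {((0 : ℤ), (-1 : ℤ))} ∪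
  t '' {j | j < m}

/-- The leader's path `(0,-1) → (0,0) → horizontally → up to t (n-1)`. -/
def leaderPath (n : ℕ) (t : ℕ → ℤ × ℤ) : Set (ℤ × ℤ) :=
  {((0 : ℤ), (-1 : ℤ)), ((0 : ℤ), (0 : ℤ))} ∪
  horizSeg (min 0 (t (n - 1)).1) (max 0 (t (n - 1)).1) 0 ∪ {t (n - 1)}

/-- Collision-freeness of the sequential target-formation phase: robots start
at `(0,-1), (1,-1), …, (n-1,-1)`, targets `t 0, …, t (n-2)` have positive
coordinates and are ordered top-to-bottom, right-to-left, and the leader target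
`t (n-1)` lies on `y = 1`. Moving one robot at a time (the rightmost remaining
robot at stage `m` moving to `t m` along its L-shaped path, and finally the
leader), no robot's path passes through a grid point occupied by a stationary
robot, so no two robots ever occupy the same grid point. -/
theorem target_formation_collision_free (n : ℕ) (hn : 2 ≤ n) (t : ℕ → ℤ × ℤ)
    (hpos : ∀ i ≤ n - 2, 0 < (t i).1 ∧ 0 < (t i).2)
    (hleader : (t (n - 1)).2 = 1)
    (horder : ∀ i j, i < j → j ≤ n - 2 →
      (t j).2 < (t i).2 ∨ ((t j).2 = (t i).2 ∧ (t j).1 < (t i).1))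
    (hdist : ∀ i j, i < j → j ≤ n - 1 → t i ≠ t j) :
    (∀ m ≤ n - 2, Disjoint (moverPath n t m) (occupiedAt n t m)) ∧
    Disjoint (leaderPath n t) (t '' {j | j ≤ n - 2}) := by
  constructor
  · intro m hm
    have hm' : (m : ℤ) ≤ (n : ℤ) - 2 := by omega
    obtain ⟨hx, hy⟩ := hpos m hm
    rw [Set.disjoint_left]
    rintro p hp hq
    simp only [moverPath, vertSeg, horizSeg, Set.mem_union, Set.mem_setOf_eq,
      Set.mem_singleton_iff] at hp
    simp only [occupiedAt, Set.mem_union, Set.mem_setOf_eq, Set.mem_singleton_iff,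
      Set.mem_image] at hq
    rcases hq with ((⟨hq1, hq2, hq3⟩ | hq) | ⟨j, hj, hjp⟩)
    · rcases hp with ((⟨h1, h2, h3⟩ | ⟨h1, h2, h3⟩) | rfl) <;> omega
    · subst hq
      rcases hp with ((⟨h1, h2, h3⟩ | ⟨h1, h2, h3⟩) | heq)
      · simp at h1; omega
      · simp at h1; omega
      · have : (t m).2 = -1 := by rw [← heq]
        omega
    · have hle : (t m).2 ≤ (t j).2 := by
        rcases horder j m hj hm with h | ⟨h, _⟩ <;> omega
      rcases hp with ((⟨h1, h2, h3⟩ | ⟨h1, h2, h3⟩) | rfl)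
      · rw [← hjp] at h3; omega
      · rw [← hjp] at h1; omega
      · exact hdist j m hj (by omega) hjp
  · rw [Set.disjoint_left]
    rintro p hp ⟨j, hj, rfl⟩
    simp only [Set.mem_setOf_eq] at hj
    obtain ⟨hx, hy⟩ := hpos j hj
    simp only [leaderPath, horizSeg, Set.mem_union, Set.mem_setOf_eq,
      Set.mem_singleton_iff, Set.mem_insert_iff] at hp
    rcases hp with (((heq | heq) | ⟨h1, _, _⟩) | heq)
    · have : (t j).2 = -1 := by rw [heq]
      omega
    · have : (t j).2 = 0 := by rw [heq]
      omega
    · omega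
    · exact hdist j (n - 1) (by omega) (by omega) heq
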